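/- Let (X_n) be a Markov chain on Ω, K a measurable subset, τ the first return time to K, and suppose A := Σ_{n≥N} sup_{x∈K} P_x(τ > n) < α for some N. Define A_N = 0 and A_{n+1} = A_n + sup_{x∈K} P_x(τ > n) for n ≥ N. Then for every x ∈ K and every n ≥ N, P_x(∀ i ∈ {n−N,…,n}, X_i ∉ K) ≤ A_n < α. -/
import Mathlib


open MeasureTheory Set Filter
open scoped ENNReal

/-- Markov chain family: see the paper, Section 2. -/
def IsMarkovChainFamily {Ω : Type*} [MeasurableSpace Ω] (P : Ω → Measure (ℕ → Ω)) : Prop :=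
  (∀ x, IsProbabilityMeasure (P x)) ∧
  (∀ x, P x {ω | ω 0 = x} = 1) ∧
  (∀ (x : Ω) (n : ℕ) (B : Set (ℕ → Ω)), MeasurableSet B →
    ∀ C : Set (ℕ → Ω), MeasurableSet C →
      (∀ ω ω' : ℕ → Ω, (∀ k ≤ n, ω k = ω' k) → (ω ∈ C ↔ ω' ∈ C)) →
      P x (C ∩ {ω | (fun k => ω (n + k)) ∈ B}) = ∫⁻ ω in C, P (ω n) B ∂ P x)

lemma meas_forall_aux {Ω : Type*} [MeasurableSpace Ω] {K : Set Ω} (hK : MeasurableSet K)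
    (p q : ℕ → Prop) : MeasurableSet {ω : ℕ → Ω | ∀ i, p i → q i → ω i ∉ K} := by
  have h : {ω : ℕ → Ω | ∀ i, p i → q i → ω i ∉ K}
      = ⋂ (i) (_ : p i) (_ : q i), (fun ω : ℕ → Ω => ω i) ⁻¹' Kᶜ := by
    ext ω; simp [Set.mem_iInter]
  rw [h]
  exact MeasurableSet.iInter fun i => MeasurableSet.iInter fun _ =>
    MeasurableSet.iInter fun _ => (measurable_pi_apply i) hK.compl

lemma stmt19_aux {Ω : Type*} [MeasurableSpace Ω] (P : Ω → Measure (ℕ → Ω))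
    (hP : IsMarkovChainFamily P) (K : Set Ω) (hK : MeasurableSet K) (N : ℕ) :
    ∀ n : ℕ, N ≤ n → ∀ x ∈ K,
      P x {ω | ∀ i, n - N ≤ i → i ≤ n → ω i ∉ K}
        ≤ ∑ m ∈ Finset.Ico N n, ⨆ x ∈ K, P x {ω | ∀ k, 1 ≤ k → k ≤ m → ω k ∉ K} := by
  classical
  obtain ⟨hprob, hstart, hmarkov⟩ := hP
  intro n
  induction n using Nat.strong_induction_on with
  | _ n IH =>
  intro hNn x hx
  haveI := hprob x
  rcases eq_or_lt_of_le hNn with h | h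
  · -- base case n = N
    subst h
    have hE : MeasurableSet {ω : ℕ → Ω | ∀ i, N - N ≤ i → i ≤ N → ω i ∉ K} :=
      meas_forall_aux hK _ _
    have h1 : P x {ω : ℕ → Ω | ω 0 = x}
        ≤ P x {ω | ∀ i, N - N ≤ i → i ≤ N → ω i ∉ K}ᶜ := by
      apply measure_mono
      intro ω h0 hmem
      exact hmem 0 (by omega) (by omega) (h0 ▸ hx)
    have h2 : P x {ω | ∀ i, N - N ≤ i → i ≤ N → ω i ∉ K}ᶜ = 1 :=
      le_antisymm prob_le_one (le_trans (hstart x).ge h1)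
    have h3 := measure_add_measure_compl (μ := P x) hE
    rw [h2, measure_univ] at h3
    have h4 : P x {ω | ∀ i, N - N ≤ i → i ≤ N → ω i ∉ K} = 0 := by
      rw [add_comm] at h3
      exact (ENNReal.add_right_inj (a := (1 : ℝ≥0∞)) ENNReal.one_ne_top).mp
        (by simpa using h3)
    rw [Finset.Ico_self, Finset.sum_empty]
    exact h4.le
  · -- inductive step : n = m + 1 with N ≤ m
    obtain ⟨m, rfl⟩ : ∃ m, n = m + 1 := ⟨n - 1, by omega⟩
    have hNm : N ≤ m := by omega
    set A : ℝ≥0∞ :=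
      ∑ j ∈ Finset.Ico N m, ⨆ y ∈ K, P y {ω : ℕ → Ω | ∀ k, 1 ≤ k → k ≤ j → ω k ∉ K} with hA
    set E : Set (ℕ → Ω) := {ω | ∀ i, m + 1 - N ≤ i → i ≤ m + 1 → ω i ∉ K} with hEdef
    set G : Set (ℕ → Ω) := {ω | ∀ k, 1 ≤ k → k ≤ m → ω k ∉ K} with hGdef
    set T : ℕ → Set (ℕ → Ω) := fun j => {ω | (∀ k, 1 ≤ k → k < j → ω k ∉ K) ∧ ω j ∈ K} with hTdef
    set B : ℕ → Set (ℕ → Ω) := fun j => {ω | ∀ i, m + 1 - j - N ≤ i → i ≤ m + 1 - j → ω i ∉ K}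
      with hBdef
    have hTmeas : ∀ j, MeasurableSet (T j) := fun j =>
      MeasurableSet.inter (meas_forall_aux hK _ _) ((measurable_pi_apply j) hK)
    have hBmeas : ∀ j, MeasurableSet (B j) := fun j => meas_forall_aux hK _ _
    have cover : E ⊆ G ∪ ⋃ j ∈ Finset.Icc 1 (m - N), (T j ∩ {ω | (fun k => ω (j + k)) ∈ B j}) := by
      intro ω hω
      by_cases hG : ω ∈ G
      · exact Or.inl hG
      · right
        have hex : ∃ k, 1 ≤ k ∧ k ≤ m ∧ ω k ∈ K := by
          by_contra hc
          push_neg at hc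
          exact hG fun k h1 h2 => hc k h1 h2
        obtain ⟨hj1, hjm, hjK⟩ := Nat.find_spec hex
        have hjN : Nat.find hex ≤ m - N := by
          by_contra hcon
          exact hω (Nat.find hex) (by omega) (by omega) hjK
        simp only [Set.mem_iUnion]
        refine ⟨Nat.find hex, Finset.mem_Icc.mpr ⟨hj1, hjN⟩, ⟨⟨?_, hjK⟩, ?_⟩⟩
        · intro k hk1 hkj
          have hmin := Nat.find_min hex hkj
          push_neg at hmin
          exact hmin hk1 (by omega)
        · intro i hi1 hi2
          exact hω (Nat.find hex + i) (by omega) (by omega)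
    have hdisjT : (↑(Finset.Icc 1 (m - N)) : Set ℕ).PairwiseDisjoint T := by
      intro a ha b hb hab
      refine Set.disjoint_left.mpr ?_
      rintro ω ⟨ha1, ha2⟩ ⟨hb1, hb2⟩
      simp only [Finset.coe_Icc, Set.mem_Icc] at ha hb
      rcases lt_or_gt_of_ne hab with h | h
      · exact hb1 a ha.1 h ha2
      · exact ha1 b hb.1 h hb2
    have hsumT : ∑ j ∈ Finset.Icc 1 (m - N), P x (T j) ≤ 1 := by
      rw [← measure_biUnion_finset hdisjT fun j _ => hTmeas j]
      exact prob_le_one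
    have hterm : ∀ j ∈ Finset.Icc 1 (m - N),
        P x (T j ∩ {ω | (fun k => ω (j + k)) ∈ B j}) ≤ A * P x (T j) := by
      intro j hj
      simp only [Finset.mem_Icc] at hj
      have hCdep : ∀ ω ω' : ℕ → Ω, (∀ k ≤ j, ω k = ω' k) → (ω ∈ T j ↔ ω' ∈ T j) := by
        intro ω ω' hk
        constructor
        · rintro ⟨h1, h2⟩
          exact ⟨fun k hk1 hkj => (hk k (le_of_lt hkj)) ▸ h1 k hk1 hkj, (hk j le_rfl) ▸ h2⟩
        · rintro ⟨h1, h2⟩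
          exact ⟨fun k hk1 hkj => (hk k (le_of_lt hkj)).symm ▸ h1 k hk1 hkj,
            (hk j le_rfl).symm ▸ h2⟩
      have hmp := hmarkov x j (B j) (hBmeas j) (T j) (hTmeas j) hCdep
      rw [hmp]
      have hb : ∀ ω ∈ T j, P (ω j) (B j) ≤ A := by
        intro ω hω
        have hIH := IH (m + 1 - j) (by omega) (by omega) (ω j) hω.2
        refine le_trans hIH ?_
        rw [hA]
        apply Finset.sum_le_sum_of_subset
        exact Finset.Ico_subset_Ico le_rfl (by omega)
      calc ∫⁻ ω in T j, P (ω j) (B j) ∂ P x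
          ≤ ∫⁻ _ in T j, A ∂ P x := setLIntegral_mono measurable_const hb
        _ = A * P x (T j) := by rw [setLIntegral_const]
    have hGle : P x G ≤ ⨆ y ∈ K, P y {ω : ℕ → Ω | ∀ k, 1 ≤ k → k ≤ m → ω k ∉ K} :=
      le_biSup (fun y => P y {ω : ℕ → Ω | ∀ k, 1 ≤ k → k ≤ m → ω k ∉ K}) hx
    have key : P x E ≤ (⨆ y ∈ K, P y {ω : ℕ → Ω | ∀ k, 1 ≤ k → k ≤ m → ω k ∉ K}) + A := by
      calc P x E ≤ P x (G ∪ ⋃ j ∈ Finset.Icc 1 (m - N),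
            (T j ∩ {ω | (fun k => ω (j + k)) ∈ B j})) := measure_mono cover
        _ ≤ P x G + P x (⋃ j ∈ Finset.Icc 1 (m - N),
            (T j ∩ {ω | (fun k => ω (j + k)) ∈ B j})) := measure_union_le _ _
        _ ≤ P x G + ∑ j ∈ Finset.Icc 1 (m - N),
            P x (T j ∩ {ω | (fun k => ω (j + k)) ∈ B j}) := by
              gcongr
              exact measure_biUnion_finset_le _ _
        _ ≤ P x G + ∑ j ∈ Finset.Icc 1 (m - N), A * P x (T j) := by
              gcongr with j hj
              exact hterm j hj
        _ = P x G + A * ∑ j ∈ Finset.Icc 1 (m - N), P x (T j) := by rw [Finset.mul_sum]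
        _ ≤ (⨆ y ∈ K, P y {ω : ℕ → Ω | ∀ k, 1 ≤ k → k ≤ m → ω k ∉ K}) + A * 1 := by
              gcongr
        _ = _ := by rw [mul_one]
    rw [Finset.sum_Ico_succ_top hNm]
    exact key.trans_eq (add_comm _ _)

theorem stmt19 {Ω : Type*} [MeasurableSpace Ω] (P : Ω → Measure (ℕ → Ω))
    (hP : IsMarkovChainFamily P) (K : Set Ω) (hK : MeasurableSet K)
    (N : ℕ) (α : ℝ) (hα : 0 < α)
    (hsum : (∑' n : ℕ, ⨆ x ∈ K, P x {ω | ∀ k, 1 ≤ k → k ≤ N + n → ω k ∉ K})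
      < ENNReal.ofReal α) :
    ∀ x ∈ K, ∀ n : ℕ, N ≤ n →
      P x {ω | ∀ i, n - N ≤ i → i ≤ n → ω i ∉ K}
          ≤ (∑ m ∈ Finset.Ico N n, ⨆ x ∈ K, P x {ω | ∀ k, 1 ≤ k → k ≤ m → ω k ∉ K}) ∧
        (∑ m ∈ Finset.Ico N n, ⨆ x ∈ K, P x {ω | ∀ k, 1 ≤ k → k ≤ m → ω k ∉ K})
          < ENNReal.ofReal α := by
  intro x hx n hn
  have hlt : (∑ m ∈ Finset.Ico N n, ⨆ x ∈ K, P x {ω | ∀ k, 1 ≤ k → k ≤ m → ω k ∉ K})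
      < ENNReal.ofReal α := by
    calc ∑ m ∈ Finset.Ico N n, ⨆ x ∈ K, P x {ω | ∀ k, 1 ≤ k → k ≤ m → ω k ∉ K}
        = ∑ j ∈ Finset.range (n - N), ⨆ x ∈ K, P x {ω | ∀ k, 1 ≤ k → k ≤ N + j → ω k ∉ K} :=
          Finset.sum_Ico_eq_sum_range _ _ _
      _ ≤ ∑' j : ℕ, ⨆ x ∈ K, P x {ω | ∀ k, 1 ≤ k → k ≤ N + j → ω k ∉ K} :=
          ENNReal.sum_le_tsum _
      _ < ENNReal.ofReal α := hsum
  exact ⟨stmt19_aux P hP K hK N n hn x hx, hlt⟩
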